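/- Let δ, γ ∈ (−1, +∞) satisfy M(δ,γ) < 1 and additionally δ ≥ 0, and let Φ : [0,∞) → ℝ be the unique bounded real-analytic solution of problem (P) with 0 ≤ Φ ≤ 1. Then Φ is concave on [0,∞). -/

import Mathlib

open Real Filter Set

/-- The constant `M(δ,γ)` from the paper. -/
noncomputable def Mconst (δ γ : ℝ) : ℝ :=
  ((max 1 (1+δ)) ^ ((3:ℝ)/2) * (max 1 (1+γ)) ^ ((1:ℝ)/2) /
    ((min 1 (1+δ)) ^ ((5:ℝ)/2) * (min 1 (1+γ)) ^ ((1:ℝ)/2))) *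
  (2*|δ| + |δ-γ| * (max 1 (1+δ)) / ((min 1 (1+δ)) * (min 1 (1+γ))))

/-- `y` solves problem (P): `((1+δy)y')' + 2x(1+γy)y' = 0` on `(0,∞)`,
`y(0) = 0` and `y(x) → 1` as `x → ∞`. -/
def SolvesP (δ γ : ℝ) (y : ℝ → ℝ) : Prop :=
  (∀ x ∈ Set.Ioi (0:ℝ), DifferentiableAt ℝ y x) ∧
  (∀ x ∈ Set.Ioi (0:ℝ),
    HasDerivAt (fun t => (1 + δ * y t) * deriv y t)
      (-(2 * x * (1 + γ * y x) * deriv y x)) x) ∧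
  y 0 = 0 ∧ Tendsto y atTop (nhds 1)

/-- `y` is a bounded real-analytic function on `[0,∞)`. -/
def BddAnalytic (y : ℝ → ℝ) : Prop :=
  AnalyticOn ℝ y (Set.Ici 0) ∧ ∃ C : ℝ, ∀ x ≥ (0:ℝ), |y x| ≤ C

/-! The quantity `(1 + δΦ) Φ'` satisfies a linear first-order equation, so with an integrating
factor `(1 + δΦ(x)) Φ'(x) = C e^{A(x)}` with `A' = -2x(1 + γΦ)/(1 + δΦ) ≤ 0`. The constant `C`
cannot be negative, since then `Φ` would decrease strictly towards its limit `1` and exceed `1`.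
Hence `Φ' ≥ 0`, so `Φ` increases, and for `δ ≥ 0` both `e^{A}` and `1/(1 + δΦ)` decrease:
`Φ'` is antitone and `Φ` is concave. -/

theorem one_add_mul_pos_of_mem_Icc {c y : ℝ} (hc : -1 < c) (hy : y ∈ Icc 0 1) :
    0 < 1 + c * y := by
  obtain ⟨hy₀, hy₁⟩ := hy
  rcases le_or_gt 0 c with h | h <;> nlinarith

theorem StrictAntiOn.lt_of_tendsto_atTop {α β : Type*} [LinearOrder α] [NoMaxOrder α]
    [LinearOrder β] [TopologicalSpace β] [OrderClosedTopology β] {f : α → β} {a : α} {l : β}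
    (hf : StrictAntiOn f (Ioi a)) (hlim : Tendsto f atTop (nhds l)) {x : α} (hx : a < x) :
    l < f x := by
  have : Nonempty α := ⟨x⟩
  obtain ⟨y, hxy⟩ := exists_gt x
  have hya : a < y := hx.trans hxy
  have hly : l ≤ f y := le_of_tendsto hlim <| by
    filter_upwards [eventually_ge_atTop y] with z hz
    exact hf.antitoneOn hya (hya.trans_le hz) hz
  exact hly.trans_lt (hf hx hya hxy)

theorem hasDerivAt_integral_of_continuousOn {f : ℝ → ℝ} {s : Set ℝ} (hs : IsOpen s)
    (hs' : s.OrdConnected) (hf : ContinuousOn f s) {x₀ x : ℝ} (hx₀ : x₀ ∈ s) (hx : x ∈ s) :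
    HasDerivAt (fun y => ∫ t in x₀..y, f t) (f x) x :=
  intervalIntegral.integral_hasDerivAt_right
    (hf.mono (hs'.uIcc_subset hx₀ hx)).intervalIntegrable
    ⟨s, hs.mem_nhds hx, hf.aestronglyMeasurable hs.measurableSet⟩
    (hf.continuousAt (hs.mem_nhds hx))

theorem IsOpen.exists_eq_mul_exp_of_hasDerivAt {s : Set ℝ} (hs : IsOpen s)
    (hs' : IsPreconnected s) {a A g : ℝ → ℝ} (hA : ∀ x ∈ s, HasDerivAt A (a x) x)
    (hg : ∀ x ∈ s, HasDerivAt g (a x * g x) x) : ∃ C, ∀ x ∈ s, g x = C * exp (A x) := by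
  have hderiv : ∀ x ∈ s, HasDerivAt (fun y => g y * exp (-A y)) 0 x := fun x hx =>
    ((hg x hx).mul (hA x hx).neg.exp).congr_deriv (by ring)
  obtain ⟨C, hC⟩ := hs.exists_is_const_of_deriv_eq_zero hs'
    (fun x hx => (hderiv x hx).differentiableAt.differentiableWithinAt)
    (fun x hx => (hderiv x hx).deriv)
  refine ⟨C, fun x hx => ?_⟩
  rw [← hC x hx, mul_assoc, ← exp_add, neg_add_cancel, exp_zero, mul_one]

section Problem

variable {δ γ : ℝ} {Φ : ℝ → ℝ}

theorem SolvesP.exists_deriv_eq_mul_exp (hΦ : SolvesP δ γ Φ)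
    (hδΦ : ∀ x ∈ Ioi 0, 0 < 1 + δ * Φ x) (hγΦ : ∀ x ∈ Ioi 0, 0 < 1 + γ * Φ x) :
    ∃ C A, AntitoneOn A (Ioi 0) ∧ ∀ x ∈ Ioi 0, deriv Φ x = C * exp (A x) / (1 + δ * Φ x) := by
  obtain ⟨hdiff, hode, -, -⟩ := hΦ
  set h : ℝ → ℝ := fun x => 2 * x * (1 + γ * Φ x) / (1 + δ * Φ x)
  have hΦc : ContinuousOn Φ (Ioi 0) := fun x hx => (hdiff x hx).continuousAt.continuousWithinAt
  have hh : ContinuousOn h (Ioi 0) :=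
    ContinuousOn.div (by fun_prop) (by fun_prop) fun x hx => (hδΦ x hx).ne'
  have hA : ∀ x ∈ Ioi (0 : ℝ), HasDerivAt (fun y => -∫ t in (1 : ℝ)..y, h t) (-h x) x :=
    fun x hx => (hasDerivAt_integral_of_continuousOn isOpen_Ioi ordConnected_Ioi hh
      (mem_Ioi.2 one_pos) hx).neg
  obtain ⟨C, hC⟩ := isOpen_Ioi.exists_eq_mul_exp_of_hasDerivAt isPreconnected_Ioi hA
    (g := fun x => (1 + δ * Φ x) * deriv Φ x) fun x hx => (hode x hx).congr_deriv <| by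
      simp only [h]
      rw [neg_mul, ← mul_assoc, div_mul_cancel₀ _ (hδΦ x hx).ne']
  refine ⟨C, _, antitoneOn_of_deriv_nonpos (convex_Ioi 0)
    (fun x hx => (hA x hx).continuousAt.continuousWithinAt) ?_ ?_, fun x hx => ?_⟩
  · rw [interior_Ioi]
    exact fun x hx => (hA x hx).differentiableAt.differentiableWithinAt
  · rw [interior_Ioi]
    intro x hx
    rw [(hA x hx).deriv, neg_nonpos]
    exact div_nonneg (mul_nonneg (by linarith [mem_Ioi.1 hx]) (hγΦ x hx).le) (hδΦ x hx).le
  · rw [eq_div_iff (hδΦ x hx).ne', ← hC x hx, mul_comm]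

theorem SolvesP.exists_deriv_eq_nonneg_mul_exp (hΦ : SolvesP δ γ Φ)
    (hδΦ : ∀ x ∈ Ioi 0, 0 < 1 + δ * Φ x) (hγΦ : ∀ x ∈ Ioi 0, 0 < 1 + γ * Φ x)
    (hΦ₁ : ∀ x ∈ Ioi 0, Φ x ≤ 1) :
    ∃ C, 0 ≤ C ∧ ∃ A, AntitoneOn A (Ioi 0) ∧
      ∀ x ∈ Ioi 0, deriv Φ x = C * exp (A x) / (1 + δ * Φ x) := by
  obtain ⟨C, A, hA, hΦ'⟩ := hΦ.exists_deriv_eq_mul_exp hδΦ hγΦ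
  refine ⟨C, ?_, A, hA, hΦ'⟩
  by_contra! hC
  have hanti : StrictAntiOn Φ (Ioi 0) := by
    refine strictAntiOn_of_deriv_neg (convex_Ioi 0)
      (fun x hx => (hΦ.1 x hx).continuousAt.continuousWithinAt) fun x hx => ?_
    rw [interior_Ioi] at hx
    rw [hΦ' x hx]
    exact div_neg_of_neg_of_pos (mul_neg_of_neg_of_pos hC (exp_pos _)) (hδΦ x hx)
  exact (hΦ₁ 1 (mem_Ioi.2 one_pos)).not_gt (hanti.lt_of_tendsto_atTop hΦ.2.2.2 one_pos)

theorem SolvesP.antitoneOn_deriv (hδ : 0 ≤ δ) (hΦ : SolvesP δ γ Φ)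
    (hδΦ : ∀ x ∈ Ioi 0, 0 < 1 + δ * Φ x) (hγΦ : ∀ x ∈ Ioi 0, 0 < 1 + γ * Φ x)
    (hΦ₁ : ∀ x ∈ Ioi 0, Φ x ≤ 1) : AntitoneOn (deriv Φ) (Ioi 0) := by
  obtain ⟨C, hC, A, hA, hΦ'⟩ := hΦ.exists_deriv_eq_nonneg_mul_exp hδΦ hγΦ hΦ₁
  have hmono : MonotoneOn Φ (Ioi 0) := by
    refine monotoneOn_of_deriv_nonneg (convex_Ioi 0)
      (fun x hx => (hΦ.1 x hx).continuousAt.continuousWithinAt) ?_ fun x hx => ?_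
    · rw [interior_Ioi]
      exact fun x hx => (hΦ.1 x hx).differentiableWithinAt
    · rw [interior_Ioi] at hx
      rw [hΦ' x hx]
      exact div_nonneg (by positivity) (hδΦ x hx).le
  intro x hx y hy hxy
  rw [hΦ' x hx, hΦ' y hy]
  refine div_le_div₀ (by positivity) ?_ (hδΦ x hx) ?_
  · exact mul_le_mul_of_nonneg_left (exp_le_exp.2 (hA hx hy hxy)) hC
  · have := hmono hx hy hxy
    gcongr

end Problem

theorem modified_error_function_concave_general
    (δ γ : ℝ) (hγ : -1 < γ) (hδ0 : 0 ≤ δ)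
    (Φ : ℝ → ℝ) (hΦa : BddAnalytic Φ) (hΦs : SolvesP δ γ Φ)
    (hΦb : ∀ x ≥ (0:ℝ), 0 ≤ Φ x ∧ Φ x ≤ 1) :
    ConcaveOn ℝ (Set.Ici 0) Φ := by
  have hΦ₁ : ∀ x ∈ Ioi (0 : ℝ), Φ x ≤ 1 := fun x hx => (hΦb x hx.le).2
  have hδΦ : ∀ x ∈ Ioi (0 : ℝ), 0 < 1 + δ * Φ x := fun x hx =>
    one_add_mul_pos_of_mem_Icc (by linarith) (hΦb x hx.le)
  have hγΦ : ∀ x ∈ Ioi (0 : ℝ), 0 < 1 + γ * Φ x := fun x hx =>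
    one_add_mul_pos_of_mem_Icc hγ (hΦb x hx.le)
  refine AntitoneOn.concaveOn_of_deriv (convex_Ici 0) hΦa.1.continuousOn ?_ ?_ <;>
    rw [interior_Ici]
  · exact fun x hx => (hΦs.1 x hx).differentiableWithinAt
  · exact hΦs.antitoneOn_deriv hδ0 hδΦ hγΦ hΦ₁

theorem modified_error_function_concave
    (δ γ : ℝ) (hδ : -1 < δ) (hγ : -1 < γ) (hM : Mconst δ γ < 1) (hδ0 : 0 ≤ δ)
    (Φ : ℝ → ℝ) (hΦa : BddAnalytic Φ) (hΦs : SolvesP δ γ Φ)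
    (hΦb : ∀ x ≥ (0:ℝ), 0 ≤ Φ x ∧ Φ x ≤ 1) :
    ConcaveOn ℝ (Set.Ici 0) Φ :=
  modified_error_function_concave_general δ γ hγ hδ0 Φ hΦa hΦs hΦb
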